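/- Let A ⊆ ℕ be nonempty and A' = {x ∈ A : stretch(A, x) odd} ∪ {y ∉ A : y > 0 and stretch(A, y−1) odd}. Then A Δ A' = (A ∩ A') + 1. -/

import Mathlib

/-
Since `stretch A (n + 1) = stretch A n + 1` whenever `n + 1 ∈ A`, the parity of the stretch
alternates along each run of `A`. Hence `A ∩ inv' A` is the set of points of odd stretch, and
for `n + 1` both sides of the identity reduce to the oddness of `stretch A n`: if `n + 1 ∈ A` it
lies in `A \ inv' A` exactly when its stretch `stretch A n + 1` is even, and if `n + 1 ∉ A` it lies
in `inv' A \ A` exactly when `stretch A n` is odd. The point `0` lies on neither side, because its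
stretch is `1` when `0 ∈ A`.
-/

open scoped symmDiff

def shift (A : Set ℕ) : Set ℕ := (· + 1) '' A

def kplus (A B : Set ℕ) : Set ℕ := (A ∆ B) ∆ shift (A ∩ B)

open Classical in
noncomputable def stretch (A : Set ℕ) (n : ℕ) : ℕ :=
  if n ∈ A then sSup {k | k ≤ n ∧ Set.Icc (n - k) n ⊆ A} + 1 else 0

noncomputable def inv' (A : Set ℕ) : Set ℕ :=
  {x ∈ A | Odd (stretch A x)} ∪ {y | y ∉ A ∧ y > 0 ∧ Odd (stretch A (y - 1))}

open Set

section Stretch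

variable {A : Set ℕ} {n : ℕ}

lemma stretch_of_notMem (h : n ∉ A) : stretch A n = 0 := by
  simp [stretch, h]

lemma stretch_eq_of_isGreatest {m : ℕ} (hn : n ∈ A)
    (hm : IsGreatest {k | k ≤ n ∧ Icc (n - k) n ⊆ A} m) : stretch A n = m + 1 := by
  simp [stretch, hn, hm.csSup_eq]

lemma isGreatest_stretch_sub_one (hn : n ∈ A) :
    IsGreatest {k | k ≤ n ∧ Icc (n - k) n ⊆ A} (stretch A n - 1) := by
  set S := {k | k ≤ n ∧ Icc (n - k) n ⊆ A}
  have hzero : 0 ∈ S := ⟨n.zero_le, by simpa using hn⟩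
  have hbdd : BddAbove S := ⟨n, fun _ hk => hk.1⟩
  have hsSup : stretch A n - 1 = sSup S := by simp [stretch, hn, S]
  rw [hsSup]
  exact ⟨Nat.sSup_mem ⟨0, hzero⟩ hbdd, fun _ hk => le_csSup hbdd hk⟩

lemma stretch_zero_of_mem (h : 0 ∈ A) : stretch A 0 = 1 :=
  stretch_eq_of_isGreatest h ⟨⟨le_rfl, by simpa using h⟩, fun _ hk => hk.1⟩

lemma stretch_succ_of_mem (h : n + 1 ∈ A) : stretch A (n + 1) = stretch A n + 1 := by
  by_cases hn : n ∈ A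
  · obtain ⟨⟨hle, hrun⟩, hmax⟩ := isGreatest_stretch_sub_one hn
    have hpos : 0 < stretch A n := by simp [stretch, hn]
    refine stretch_eq_of_isGreatest h ⟨⟨by omega, fun m ⟨hm₁, hm₂⟩ => ?_⟩, fun k ⟨hk₁, hk₂⟩ => ?_⟩
    · rcases hm₂.lt_or_eq with hlt | rfl
      · exact hrun ⟨by omega, by omega⟩
      · exact h
    · obtain _ | j := k
      · exact Nat.zero_le _
      · have hj : j ≤ stretch A n - 1 :=
          hmax ⟨by omega, fun m ⟨hm₁, hm₂⟩ => hk₂ ⟨by omega, by omega⟩⟩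
        omega
  · rw [stretch_of_notMem hn]
    refine stretch_eq_of_isGreatest h ⟨⟨Nat.zero_le _, by simpa using h⟩, fun k hk => ?_⟩
    by_contra hk0
    exact hn (hk.2 ⟨by omega, by omega⟩)

end Stretch

section Inv

variable {A : Set ℕ} {x : ℕ}

lemma mem_inv'_of_mem (hx : x ∈ A) : x ∈ inv' A ↔ Odd (stretch A x) := by
  simp [inv', hx]

lemma mem_inv'_of_notMem (hx : x ∉ A) : x ∈ inv' A ↔ 0 < x ∧ Odd (stretch A (x - 1)) := by
  simp [inv', hx]

end Inv

lemma inter_inv'_eq (A : Set ℕ) : A ∩ inv' A = {x | Odd (stretch A x)} := by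
  ext x
  by_cases hx : x ∈ A
  · simp [hx, mem_inv'_of_mem hx]
  · simp [hx, stretch_of_notMem hx]

lemma succ_mem_shift_iff {S : Set ℕ} {n : ℕ} : n + 1 ∈ shift S ↔ n ∈ S := by
  simp [shift]

lemma zero_notMem_shift {S : Set ℕ} : 0 ∉ shift S := by
  simp [shift]

theorem stmt15 : ∀ A : Set ℕ, A.Nonempty → A ∆ inv' A = shift (A ∩ inv' A) := by
  intro A _
  ext x
  rw [mem_symmDiff]
  cases x with
  | zero =>
    by_cases h0 : 0 ∈ A
    · simp [h0, zero_notMem_shift, mem_inv'_of_mem h0, stretch_zero_of_mem h0]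
    · simp [h0, zero_notMem_shift, mem_inv'_of_notMem h0]
  | succ n =>
    rw [succ_mem_shift_iff, inter_inv'_eq, mem_ofPred_eq]
    by_cases hn : n + 1 ∈ A
    · simp [hn, mem_inv'_of_mem hn, stretch_succ_of_mem hn, Nat.odd_add_one]
    · simp [hn, mem_inv'_of_notMem hn]
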